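/- arXiv:math/0104019 — 11 statements merged into one kernel-verified Lean document; each statement's English description precedes it below -/
import Mathlib

section
/- Let $S \subseteq A$ be rings with a split exact sequence of rings $0 \to J \to A \xrightarrow{\pi} S \to 0$ (i.e., $\pi$ is a ring homomorphism with $\pi|_S = \mathrm{id}_S$ and kernel $J$). If $A/S$ is a separable extension, then $J$ is an idempotent ideal, i.e., $J^2 = J$. -/
/-- Separability of the ring extension `A / S`, for a subring `S` of `A`,
expressed via a Casimir (separability) element `e = ∑ᵢ xᵢ ⊗ yᵢ ∈ A ⊗_S A`:
`∑ᵢ xᵢ yᵢ = 1`, and `S`-centrality (`r • e = e • r` in `A ⊗_S A`) is encoded by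
evaluating against all `S`-balanced biadditive maps (these detect equality in
the tensor product `A ⊗_S A`). -/
def IsSeparableExtension {A : Type*} [Ring A] (S : Subring A) : Prop :=
  ∃ (n : ℕ) (x y : Fin n → A),
    (∑ i, x i * y i) = 1 ∧
    ∀ (Z : Type*) [AddCommGroup Z] (b : A →+ A →+ Z),
      (∀ (s : S) (a c : A), b (a * s) c = b a (s * c)) →
      ∀ r : A, (∑ i, b (r * x i) (y i)) = ∑ i, b (x i) (y i * r)

/-!
The map `(a, c) ↦ (a - π a) c` is `S`-balanced. Testing the centrality of the separability
element `∑ xᵢ ⊗ yᵢ` at `j ∈ J` against it, modulo `J²`, gives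
`j = ∑ j xᵢ yᵢ ≡ ∑ (xᵢ - π xᵢ) (yᵢ j)`, whose terms all lie in `J · J`.
-/

universe u v w

theorem AddCommGroup.eq_of_forall_addMonoidHom_apply_eq {M : Type u} [AddCommGroup M] {m m' : M}
    (h : ∀ (Z : Type w) [AddCommGroup Z] (g : M →+ Z), g m = g m') : m = m' := by
  by_contra hne
  obtain ⟨c, hc⟩ :=
    CharacterModule.exists_character_apply_ne_zero_of_ne_zero (sub_ne_zero.2 hne)
  let g : M →+ ULift.{w} (AddCircle (1 : ℚ)) := AddEquiv.ulift.symm.toAddMonoidHom.comp c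
  exact hc <| by rw [map_sub, sub_eq_zero]; exact congrArg ULift.down (h _ g)

/-- The definition tests against targets in one universe only; since homomorphisms into `ℚ/ℤ`
separate points, this is no restriction. -/
theorem IsSeparableExtension.exists_separabilityElement {A : Type u} [Ring A] {S : Subring A}
    (hsep : IsSeparableExtension.{u, v} S) :
    ∃ (n : ℕ) (x y : Fin n → A), (∑ i, x i * y i) = 1 ∧
      ∀ (M : Type w) [AddCommGroup M] (b : A →+ A →+ M),
        (∀ (s : S) (a c : A), b (a * s) c = b a (s * c)) →
        ∀ r : A, (∑ i, b (r * x i) (y i)) = ∑ i, b (x i) (y i * r) := by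
  obtain ⟨n, x, y, hxy, hcen⟩ := hsep
  refine ⟨n, x, y, hxy, fun M _ b hb r => ?_⟩
  refine AddCommGroup.eq_of_forall_addMonoidHom_apply_eq.{w, v} fun Z _ g => ?_
  have hbal (s : S) (a c : A) : b.compr₂ g (a * s) c = b.compr₂ g a (s * c) := by
    simp only [AddMonoidHom.compr₂_apply, hb]
  simpa only [map_sum, AddMonoidHom.compr₂_apply] using hcen Z (b.compr₂ g) hbal r

section kerProj

variable {A : Type u} [Ring A] {S : Subring A} (π : A →+* S)

def kerProj : A →+ A :=
  AddMonoidHom.id A - S.subtype.toAddMonoidHom.comp π.toAddMonoidHom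

theorem kerProj_apply (a : A) : kerProj π a = a - π a := rfl

theorem kerProj_of_mem_ker {a : A} (ha : a ∈ RingHom.ker π) : kerProj π a = a := by
  rw [RingHom.mem_ker] at ha
  simp [kerProj_apply, ha]

variable {π}

theorem kerProj_mem_ker (hπ : ∀ s : S, π (s : A) = s) (a : A) :
    kerProj π a ∈ RingHom.ker π := by
  rw [RingHom.mem_ker, kerProj_apply, map_sub, hπ, sub_self]

theorem kerProj_mul_coe (hπ : ∀ s : S, π (s : A) = s) (a : A) (s : S) :
    kerProj π (a * s) = kerProj π a * s := by
  simp only [kerProj_apply, map_mul, hπ, Subring.coe_mul, sub_mul]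

end kerProj

/-- If `0 → J → A → S → 0` is a split exact sequence of rings (`π : A → S` is a
ring homomorphism restricting to the identity on the subring `S`, with kernel `J`)
and `A/S` is a separable extension, then `J` is an idempotent ideal: `J² = J`. -/
theorem biseparable_stmt0 {A : Type*} [Ring A] (S : Subring A)
    (π : A →+* S) (hπ : ∀ s : S, π (s : A) = s)
    (hsep : IsSeparableExtension S) :
    RingHom.ker π ^ 2 = RingHom.ker π := by
  set J := RingHom.ker π
  refine le_antisymm (Ideal.pow_le_self two_ne_zero) fun j hj => ?_
  obtain ⟨n, x, y, hxy, hcen⟩ := hsep.exists_separabilityElement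
  let b : A →+ A →+ A ⧸ J ^ 2 := (AddMonoidHom.mul.comp (kerProj π)).compr₂ (J ^ 2).mkQ
  have hbal (s : S) (a c : A) : b (a * s) c = b a (s * c) := by
    simp [b, kerProj_mul_coe hπ, mul_assoc]
  have key := hcen _ b hbal j
  have hleft : ∑ i, kerProj π (j * x i) * y i = j := by
    simp only [kerProj_of_mem_ker π (J.mul_mem_right _ hj), mul_assoc, ← Finset.mul_sum, hxy,
      mul_one]
  have hright : ∑ i, kerProj π (x i) * (y i * j) ∈ J ^ 2 :=
    Ideal.sum_mem _ fun i _ => by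
      rw [Submodule.pow_succ, Submodule.pow_one]
      exact Ideal.mul_mem_mul (kerProj_mem_ker hπ _) (J.mul_mem_left _ hj)
  simp only [b, AddMonoidHom.compr₂_apply, AddMonoidHom.comp_apply, AddMonoidHom.mul_apply,
    ← map_sum, hleft] at key
  simpa using add_mem ((Submodule.Quotient.eq _).1 key) hright
end

section
/- Let $S \subseteq A$ be rings and $\pi: A \to S$ a ring epimorphism with $\pi|_S = \mathrm{id}_S$ whose kernel $J$ is nilpotent. If $A/S$ is a separable extension, then $J = 0$ and hence $A = S$. -/
universe u v

private lemma sep_ker_le_sq {A : Type u} [Ring A] (S : Subring A) (π : A →+* S)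
    (hπ : ∀ s : S, π (s : A) = s)
    (n : ℕ) (x y : Fin n → A) (hxy : (∑ i, x i * y i) = 1)
    (hcent : ∀ (Z : Type v) [AddCommGroup Z] (b : A →+ A →+ Z),
      (∀ (s : S) (a c : A), b (a * s) c = b a (s * c)) →
      ∀ r : A, (∑ i, b (r * x i) (y i)) = ∑ i, b (x i) (y i * r)) :
    RingHom.ker π ≤ (RingHom.ker π) ^ 2 := by
  set J : Ideal A := RingHom.ker π with hJ
  intro j hj
  have hjπ : π j = 0 := hj
  rw [← Submodule.Quotient.mk_eq_zero (J ^ 2)]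
  apply CharacterModule.eq_zero_of_character_apply
  intro χ
  -- the composite additive map A →+ ULift (AddCircle 1)
  let up : AddCircle (1 : ℚ) →+ ULift.{v} (AddCircle (1 : ℚ)) :=
    AddMonoidHom.mk' ULift.up (fun _ _ => rfl)
  let g : A →+ ULift.{v} (AddCircle (1 : ℚ)) :=
    (up.comp (χ : (A ⧸ (J ^ 2)) →+ AddCircle (1 : ℚ))).comp
      (Submodule.mkQ (J ^ 2)).toAddMonoidHom
  -- the balanced biadditive map
  let b : A →+ A →+ ULift.{v} (AddCircle (1 : ℚ)) := AddMonoidHom.mk'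
    (fun a => AddMonoidHom.mk' (fun c => g ((a - ((π a : A))) * c))
      (fun c c' => by
        show g ((a - ((π a : A))) * (c + c')) = _
        rw [mul_add, map_add]))
    (fun a a' => by
      ext c
      simp only [AddMonoidHom.mk'_apply, AddMonoidHom.add_apply]
      rw [← map_add]
      congr 1
      have : ((π (a + a') : A)) = ((π a : A)) + ((π a' : A)) := by
        rw [map_add]; rfl
      rw [this, ← add_mul]
      congr 1
      abel)
  have hbal : ∀ (s : S) (a c : A), b (a * s) c = b a (s * c) := by
    intro s a c
    simp only [b, AddMonoidHom.mk'_apply]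
    congr 1
    have h1 : ((π (a * (s : A)) : A)) = (π a : A) * (s : A) := by
      rw [map_mul, hπ s]; rfl
    rw [h1, ← sub_mul, mul_assoc]
  have h := hcent _ b hbal j
  have hL : (∑ i, b (j * x i) (y i)) = g j := by
    have heq : ∀ i, b (j * x i) (y i) = g (j * (x i * y i)) := by
      intro i
      simp only [b, AddMonoidHom.mk'_apply]
      have h0 : ((π (j * x i) : A)) = 0 := by
        rw [map_mul, hjπ, zero_mul]; rfl
      rw [h0, sub_zero, mul_assoc]
    rw [Finset.sum_congr rfl (fun i _ => heq i), ← map_sum, ← Finset.mul_sum, hxy, mul_one]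
  have hR : (∑ i, b (x i) (y i * j)) = 0 := by
    refine Finset.sum_eq_zero fun i _ => ?_
    simp only [b, AddMonoidHom.mk'_apply]
    have hmem : (x i - ((π (x i) : A))) * (y i * j) ∈ J ^ 2 := by
      rw [Submodule.pow_succ, Submodule.pow_one]
      refine Ideal.mul_mem_mul ?_ ?_
      · show π (x i - ((π (x i) : A))) = 0
        rw [map_sub, hπ (π (x i)), sub_self]
      · show π (y i * j) = 0
        rw [map_mul, hjπ, mul_zero]
    show up (χ (Submodule.Quotient.mk _)) = 0
    rw [(Submodule.Quotient.mk_eq_zero (J ^ 2)).2 hmem, map_zero, map_zero]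
  rw [hL, hR] at h
  have : χ (Submodule.Quotient.mk j) = (up (χ (Submodule.Quotient.mk j))).down := rfl
  rw [this]
  have hgj : g j = up (χ (Submodule.Quotient.mk j)) := rfl
  rw [← hgj, h]
  rfl

/-- If `π : A → S` is a ring epimorphism onto the subring `S` with `π|_S = id`
and nilpotent kernel `J`, and `A/S` is a separable extension, then `J = 0`
and `A = S`. -/
theorem biseparable_stmt1 {A : Type*} [Ring A] (S : Subring A)
    (π : A →+* S) (hπ : ∀ s : S, π (s : A) = s)
    (hepi : Function.Surjective π)
    (hnil : IsNilpotent (RingHom.ker π))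
    (hsep : IsSeparableExtension S) :
    RingHom.ker π = ⊥ ∧ S = ⊤ := by
  set J : Ideal A := RingHom.ker π with hJ
  obtain ⟨n0, x, y, hxy, hcent⟩ := hsep
  have hle : J ≤ J ^ 2 := sep_ker_le_sq S π hπ n0 x y hxy hcent
  obtain ⟨n, hn⟩ := hnil
  have hpow : ∀ k : ℕ, J ≤ J ^ (k + 1) := by
    intro k
    induction k with
    | zero => rw [Submodule.pow_one]
    | succ k ih =>
      calc J ≤ J ^ 2 := hle
        _ = J ^ 1 * J := by rw [← Submodule.pow_succ]
        _ ≤ J ^ (k + 1) * J := Ideal.mul_mono_left (by rw [Submodule.pow_one]; exact ih)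
        _ = J ^ (k + 2) := by rw [← Submodule.pow_succ]
  have hbot : J = ⊥ := by
    refine le_antisymm ?_ bot_le
    have h0 : J ^ (n + 1) = ⊥ := by rw [Submodule.pow_succ, hn]; exact Ideal.bot_mul _
    exact h0 ▸ hpow n
  refine ⟨hbot, ?_⟩
  ext a
  simp only [Subring.mem_top, iff_true]
  have hmem : a - ((π a : A)) ∈ J := by
    show π (a - ((π a : A))) = 0
    rw [map_sub, hπ (π a), sub_self]
  rw [hbot] at hmem
  have h0 : a - ((π a : A)) = 0 := hmem
  have ha : a = ((π a : A)) := by rw [sub_eq_zero] at h0; exact h0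
  rw [ha]; exact (π a).2
end

section
/- Let $e = \sum_i x_i \otimes y_i$ be a separability element for a ring extension $A/S$ with a ring map $\pi: A \to S$ splitting the inclusion ($\pi|_S = \mathrm{id}_S$). Then the element $f = \sum_i \pi(x_i) y_i \in A$ is a central idempotent of $A$ satisfying $f x = \pi(x) f$ for all $x \in A$. -/
/-!
Testing the Casimir identity `r e = e r` against the `S`-balanced maps `(u, c) ↦ π(u) c` and
`(u, c) ↦ u π(c)` gives `π(r) f = f r` and `r g = g π(r)`, where `g = ∑ᵢ xᵢ π(yᵢ)`. Since
`π(f) = π(∑ᵢ xᵢ yᵢ) = 1`, the first identity at `r = f` makes `f` idempotent, and computing `f g`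
in two ways shows `f = g`; then `a f = g π(a) = f π(a) = π(a) f = f a`.
-/

open Finset

universe u v w

namespace Separability

variable {A : Type u} [Ring A] {S : Subring A} {n : ℕ} {x y : Fin n → A}

def IsBalanced (S : Subring A) {Z : Type*} [AddCommGroup Z] (b : A →+ A →+ Z) : Prop :=
  ∀ (s : S) (a c : A), b (a * s) c = b a (s * c)

/-- `∑ᵢ xᵢ ⊗ yᵢ ∈ A ⊗[S] A` commutes with every `r : A`, as seen by `S`-balanced maps into `Z`. -/
def IsCasimir (S : Subring A) (x y : Fin n → A) (Z : Type*) [AddCommGroup Z] : Prop :=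
  ∀ b : A →+ A →+ Z, IsBalanced S b → ∀ r : A, ∑ i, b (r * x i) (y i) = ∑ i, b (x i) (y i * r)

lemma IsBalanced.compr₂ {Z Z' : Type*} [AddCommGroup Z] [AddCommGroup Z'] {b : A →+ A →+ Z}
    (hb : IsBalanced S b) (χ : Z →+ Z') : IsBalanced S (b.compr₂ χ) := fun s a c => by
  simp only [AddMonoidHom.compr₂_apply, hb s a c]

/-- Characters into `ℚ/ℤ` separate points, so the Casimir identity in one universe implies it
in every other. -/
lemma isCasimir_of_forall_universe (h : ∀ (Z : Type v) [AddCommGroup Z], IsCasimir S x y Z)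
    (Z : Type w) [AddCommGroup Z] : IsCasimir S x y Z := by
  intro b hb r
  rw [← sub_eq_zero]
  refine CharacterModule.eq_zero_of_character_apply fun χ => ?_
  let χ' : Z →+ ULift.{v} (AddCircle (1 : ℚ)) := AddEquiv.ulift.symm.toAddMonoidHom.comp χ
  have hχ := congrArg AddEquiv.ulift (h _ (b.compr₂ χ') (hb.compr₂ χ') r)
  simp only [map_sum] at hχ
  rw [map_sub, map_sum, map_sum, sub_eq_zero]
  exact hχ

variable {π : A →+* S}

def contractLeft (π : A →+* S) (x y : Fin n → A) : A := ∑ i, (π (x i) : A) * y i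

def contractRight (π : A →+* S) (x y : Fin n → A) : A := ∑ i, x i * (π (y i) : A)

lemma isBalanced_mul_comp (hπ : ∀ s : S, π s = s) :
    IsBalanced S (AddMonoidHom.mul.comp (S.subtype.comp π).toAddMonoidHom) := fun s a c => by
  simp [hπ, mul_assoc]

lemma isBalanced_mul_compl₂ (hπ : ∀ s : S, π s = s) :
    IsBalanced S (AddMonoidHom.mul.compl₂ (S.subtype.comp π).toAddMonoidHom) := fun s a c => by
  simp [hπ, mul_assoc]

lemma coe_proj_mul_contractLeft (hπ : ∀ s : S, π s = s) (hcas : IsCasimir S x y A) (r : A) :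
    (π r : A) * contractLeft π x y = contractLeft π x y * r := by
  have h := hcas _ (isBalanced_mul_comp hπ) r
  simp only [AddMonoidHom.comp_apply, AddMonoidHom.mul_apply, RingHom.toAddMonoidHom_eq_coe,
    AddMonoidHom.coe_coe, RingHom.comp_apply, Subring.coe_subtype, map_mul] at h
  simp only [contractLeft, mul_sum, sum_mul, mul_assoc, ← h]

lemma mul_contractRight (hπ : ∀ s : S, π s = s) (hcas : IsCasimir S x y A) (r : A) :
    r * contractRight π x y = contractRight π x y * π r := by
  have h := hcas _ (isBalanced_mul_compl₂ hπ) r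
  simp only [AddMonoidHom.compl₂_apply, AddMonoidHom.mul_apply, RingHom.toAddMonoidHom_eq_coe,
    AddMonoidHom.coe_coe, RingHom.comp_apply, Subring.coe_subtype, map_mul] at h
  simp only [contractRight, mul_sum, sum_mul, ← mul_assoc, h]

lemma contractLeft_mul_coe (hπ : ∀ s : S, π s = s) (hcas : IsCasimir S x y A) (s : S) :
    contractLeft π x y * s = s * contractLeft π x y := by
  rw [← coe_proj_mul_contractLeft hπ hcas, hπ]

lemma proj_contractLeft (hπ : ∀ s : S, π s = s) (hunit : ∑ i, x i * y i = 1) :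
    π (contractLeft π x y) = 1 := by
  rw [← map_one π, ← hunit]
  simp only [contractLeft, map_sum, map_mul, hπ]

lemma contractLeft_eq_contractRight (hπ : ∀ s : S, π s = s) (hunit : ∑ i, x i * y i = 1)
    (hcas : IsCasimir S x y A) : contractLeft π x y = contractRight π x y := by
  set f := contractLeft π x y
  have hf (r : A) : (π r : A) * f = f * r := coe_proj_mul_contractLeft hπ hcas r
  have hf_comm (s : S) : f * s = s * f := contractLeft_mul_coe hπ hcas s
  calc f = ((π (∑ i, x i * y i) : S) : A) * f := by rw [hunit, map_one, Subring.coe_one, one_mul]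
    _ = ∑ i, (π (x i) : A) * f * π (y i) := by
      push_cast [map_sum, map_mul, sum_mul]
      simp only [mul_assoc, hf_comm]
    _ = f * contractRight π x y := by
      simp only [contractRight, mul_sum, ← mul_assoc, hf]
    _ = contractRight π x y := by
      rw [mul_contractRight hπ hcas, proj_contractLeft hπ hunit, Subring.coe_one, mul_one]

lemma isIdempotentElem_contractLeft (hπ : ∀ s : S, π s = s) (hunit : ∑ i, x i * y i = 1)
    (hcas : IsCasimir S x y A) : IsIdempotentElem (contractLeft π x y) := by
  rw [IsIdempotentElem, ← coe_proj_mul_contractLeft hπ hcas, proj_contractLeft hπ hunit,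
    Subring.coe_one, one_mul]

lemma commute_contractLeft (hπ : ∀ s : S, π s = s) (hunit : ∑ i, x i * y i = 1)
    (hcas : IsCasimir S x y A) (a : A) : Commute a (contractLeft π x y) :=
  calc a * contractLeft π x y = a * contractRight π x y := by
        rw [contractLeft_eq_contractRight hπ hunit hcas]
    _ = contractLeft π x y * π a := by
        rw [mul_contractRight hπ hcas, contractLeft_eq_contractRight hπ hunit hcas]
    _ = contractLeft π x y * a := by
        rw [contractLeft_mul_coe hπ hcas, coe_proj_mul_contractLeft hπ hcas]

end Separability

open Separability

/-- Let `e = ∑ᵢ xᵢ ⊗ yᵢ` be a separability element for a ring extension `A/S`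
(`∑ᵢ xᵢ yᵢ = 1` and `a • e = e • a` in `A ⊗_S A` for all `a`, the latter encoded
by evaluation against all `S`-balanced biadditive maps), and let `π : A → S` be
a ring homomorphism splitting the inclusion (`π|_S = id_S`).  Then
`f = ∑ᵢ π(xᵢ) yᵢ` is a central idempotent of `A` with `f x = π(x) f` for all `x`. -/
theorem biseparable_stmt2 {A : Type*} [Ring A] (S : Subring A)
    (π : A →+* S) (hπ : ∀ s : S, π (s : A) = s)
    (n : ℕ) (x y : Fin n → A)
    (hunit : (∑ i, x i * y i) = 1)
    (hcas : ∀ (Z : Type*) [AddCommGroup Z] (b : A →+ A →+ Z),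
      (∀ (s : S) (a c : A), b (a * s) c = b a (s * c)) →
      ∀ r : A, (∑ i, b (r * x i) (y i)) = ∑ i, b (x i) (y i * r)) :
    IsIdempotentElem (∑ i, (π (x i) : A) * y i) ∧
    (∀ a : A, a * (∑ i, (π (x i) : A) * y i) = (∑ i, (π (x i) : A) * y i) * a) ∧
    (∀ a : A, (∑ i, (π (x i) : A) * y i) * a = (π a : A) * ∑ i, (π (x i) : A) * y i) := by
  have hcasA : IsCasimir S x y A := isCasimir_of_forall_universe (fun Z _ => hcas Z) A
  exact ⟨isIdempotentElem_contractLeft hπ hunit hcasA, commute_contractLeft hπ hunit hcasA,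
    fun a => (coe_proj_mul_contractLeft hπ hcasA a).symm⟩
end

section
/- Let $R/S$ be a ring extension and let $I$ be an $R$-bimodule equipped with an associative multiplication $I \times I \to I$ compatible with the bimodule structure (a multiplicative $R$-bimodule), so that $A = R \oplus I$ and $T = S \oplus I$ are rings with multiplication $(r, i)(r', i') = (rr', ri' + ir' + ii')$. Then $R/S$ is a separable extension if and only if $A/T$ is a separable extension. -/
/-!
Since `A = R ⊕ I` with `I` an ideal, the projection `ρ : A → R` along `I` is a surjective ring
map sending `T` into `S`, so it pushes a separability element of `A/T` to one of `R/S`.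
Conversely a separability element `∑ xᵢ ⊗ yᵢ` of `R/S` still works for `A/T`: a `T`-balanced
map restricts to an `S`-balanced map on `R`, and for `j ∈ I ⊆ T` both `∑ b (j xᵢ) yᵢ` and
`∑ b xᵢ (yᵢ j)` collapse to `b 1 j`, because `j xᵢ` and `yᵢ j` lie in `T`.
-/

universe u v w

/-- An element of an abelian group is detected by its characters into `ℚ/ℤ`, and these exist in
every universe via `ULift`. -/
theorem IsSeparableExtension.change_univ {A : Type u} [Ring A] {S : Subring A}
    (h : IsSeparableExtension.{u, v} S) : IsSeparableExtension.{u, w} S := by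
  obtain ⟨n, x, y, hsum, hcent⟩ := h
  refine ⟨n, x, y, hsum, fun Z _ b hb r => sub_eq_zero.mp ?_⟩
  refine CharacterModule.eq_zero_of_character_apply fun (φ : Z →+ AddCircle (1 : ℚ)) => ?_
  let ψ : Z →+ ULift.{v} (AddCircle (1 : ℚ)) := AddEquiv.ulift.symm.toAddMonoidHom.comp φ
  have := congrArg AddEquiv.ulift (hcent _ (b.compr₂ ψ) (fun s a c => by simp [hb]) r)
  show φ (_ - _) = 0
  simpa [sub_eq_zero, ψ] using this

theorem IsSeparableExtension.of_surjective {A B : Type*} [Ring A] [Ring B] {T : Subring A}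
    {S : Subring B} (f : A →+* B) (hf : Function.Surjective f) (hTS : T ≤ S.comap f)
    (h : IsSeparableExtension.{_, v} T) : IsSeparableExtension.{_, v} S := by
  obtain ⟨n, x, y, hsum, hcent⟩ := h
  refine ⟨n, f ∘ x, f ∘ y, by simp [← map_mul, ← map_sum, hsum], fun Z _ b hb r => ?_⟩
  obtain ⟨a, rfl⟩ := hf r
  let b' := (b.comp f.toAddMonoidHom).compl₂ f.toAddMonoidHom
  have hb' : ∀ (t : T) (a c : A), b' (a * t) c = b' a (t * c) := fun t a c => by
    simpa [b'] using hb ⟨f t, hTS t.2⟩ (f a) (f c)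
  simpa [b'] using hcent Z b' hb' a

theorem sum_balanced_mul_eq_of_mem {A Z : Type*} [Ring A] [AddCommGroup Z] {T : Subring A}
    {b : A →+ A →+ Z} (hb : ∀ (t : T) (a c : A), b (a * t) c = b a (t * c)) {n : ℕ}
    {x y : Fin n → A} (hsum : ∑ i, x i * y i = 1) {j : A} (hj : j ∈ T)
    (hjx : ∀ i, j * x i ∈ T) (hyj : ∀ i, y i * j ∈ T) :
    ∑ i, b (j * x i) (y i) = ∑ i, b (x i) (y i * j) := by
  have hleft : ∑ i, b (j * x i) (y i) = b 1 j := by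
    calc ∑ i, b (j * x i) (y i) = ∑ i, b 1 (j * x i * y i) := by
          refine Finset.sum_congr rfl fun i _ => ?_
          simpa using hb ⟨_, hjx i⟩ 1 (y i)
      _ = b 1 j := by simp_rw [← map_sum, mul_assoc, ← Finset.mul_sum, hsum, mul_one]
  have hright : ∑ i, b (x i) (y i * j) = b 1 j := by
    calc ∑ i, b (x i) (y i * j) = ∑ i, b (x i * y i * j) 1 := by
          refine Finset.sum_congr rfl fun i _ => ?_
          simpa [mul_assoc] using (hb ⟨_, hyj i⟩ (x i) 1).symm
      _ = b j 1 := by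
          simp_rw [← AddMonoidHom.finsetSum_apply, ← map_sum, ← Finset.sum_mul, hsum, one_mul]
      _ = b 1 j := by simpa using hb ⟨j, hj⟩ 1 1
  rw [hleft, hright]

theorem IsSeparableExtension.of_add_ideal {A : Type*} [Ring A] {R : Subring A}
    {I : TwoSidedIdeal A} (hspan : ∀ a : A, ∃ r ∈ R, ∃ i ∈ I, a = r + i) {S : Subring R}
    {T : Subring A} (hST : S.map R.subtype ≤ T) (hIT : ∀ i ∈ I, i ∈ T)
    (h : IsSeparableExtension.{_, v} S) : IsSeparableExtension.{_, v} T := by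
  obtain ⟨n, x, y, hsum, hcent⟩ := h
  have hsumA : ∑ i, (x i : A) * y i = 1 := by simpa using congrArg Subtype.val hsum
  refine ⟨n, (x · : Fin n → A), (y · : Fin n → A), hsumA, fun Z _ b hb a => ?_⟩
  obtain ⟨r, hr, j, hj, rfl⟩ := hspan a
  let bR := (b.comp R.subtype.toAddMonoidHom).compl₂ R.subtype.toAddMonoidHom
  have hbR : ∀ (s : S) (a c : R), bR (a * s) c = bR a (s * c) := fun s a c => by
    simpa [bR] using hb ⟨s, hST ⟨s, s.2, rfl⟩⟩ a c
  have hcentR : ∑ i, b (r * x i) (y i) = ∑ i, b (x i) (y i * r) := by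
    simpa [bR] using hcent Z bR hbR ⟨r, hr⟩
  have hcentI := sum_balanced_mul_eq_of_mem hb hsumA
    (hIT j hj) (fun i => hIT _ (I.mul_mem_right _ _ hj)) (fun i => hIT _ (I.mul_mem_left _ _ hj))
  simp only [add_mul, mul_add, map_add, AddMonoidHom.add_apply, Finset.sum_add_distrib]
  rw [hcentR, hcentI]

theorem exists_ringHom_retraction_vanishing_on_ideal {A : Type*} [Ring A] (R : Subring A)
    (I : TwoSidedIdeal A) (hdisj : ∀ x : A, x ∈ R → x ∈ I → x = 0)
    (hspan : ∀ a : A, ∃ r ∈ R, ∃ i ∈ I, a = r + i) :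
    ∃ ρ : A →+* R, (∀ r : R, ρ r = r) ∧ ∀ i ∈ I, ρ i = 0 := by
  let q := I.ringCon.mk'
  have hq : ∀ a, q a = 0 ↔ a ∈ I := fun a => by
    rw [← TwoSidedIdeal.mem_ker, TwoSidedIdeal.ker_ringCon_mk']
  have hbij : Function.Bijective (q.comp R.subtype) := by
    refine ⟨(injective_iff_map_eq_zero _).mpr fun r hr => ?_, fun z => ?_⟩
    · exact Subtype.ext (hdisj r r.2 ((hq r).mp hr))
    · obtain ⟨a, rfl⟩ := I.ringCon.mk'_surjective z
      obtain ⟨r, hr, i, hi, rfl⟩ := hspan a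
      exact ⟨⟨r, hr⟩, show q r = q (r + i) by rw [map_add, (hq i).mpr hi, add_zero]⟩
  let e := RingEquiv.ofBijective _ hbij
  refine ⟨e.symm.toRingHom.comp q, fun r => e.symm_apply_apply r, fun i hi => ?_⟩
  simp [(hq i).mpr hi]

/-- Let `R/S` be a ring extension and `I` a multiplicative `R`-bimodule, so that
`A = R ⊕ I` is a ring containing `T = S ⊕ I`.  (Equivalently, and as encoded here:
`A` is a ring, `R` a subring, `I` a two-sided ideal with `A = R ⊕ I` as additive
groups, `S ≤ R` a subring, and `T = S + I`.)  Then `R/S` is a separable extension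
if and only if `A/T` is a separable extension. -/
theorem biseparable_stmt3 {A : Type*} [Ring A] (R : Subring A) (I : TwoSidedIdeal A)
    (hdisj : ∀ x : A, x ∈ R → x ∈ I → x = 0)
    (hspan : ∀ a : A, ∃ r ∈ R, ∃ i ∈ I, a = r + i)
    (S : Subring A) (hSR : S ≤ R)
    (T : Subring A) (hT : ∀ a : A, a ∈ T ↔ ∃ s ∈ S, ∃ i ∈ I, a = s + i) :
    IsSeparableExtension (S.comap R.subtype) ↔ IsSeparableExtension T := by
  obtain ⟨ρ, hρR, hρI⟩ := exists_ringHom_retraction_vanishing_on_ideal R I hdisj hspan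
  have hST : (S.comap R.subtype).map R.subtype ≤ T := by
    rintro _ ⟨s, hs, rfl⟩
    exact (hT s).2 ⟨s, hs, 0, I.zero_mem, (add_zero _).symm⟩
  have hIT : ∀ i ∈ I, i ∈ T := fun i hi => (hT i).2 ⟨0, S.zero_mem, i, hi, (zero_add i).symm⟩
  have hTS : T ≤ (S.comap R.subtype).comap ρ := by
    intro t ht
    obtain ⟨s, hs, i, hi, rfl⟩ := (hT t).1 ht
    have hρs : ρ s = ⟨s, hSR hs⟩ := hρR ⟨s, hSR hs⟩
    simpa [hρs, hρI i hi] using hs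
  exact ⟨fun h => (h.of_add_ideal hspan hST hIT).change_univ,
    fun h => (h.of_surjective ρ (fun r => ⟨r, hρR r⟩) hTS).change_univ⟩
end

section
/- Let ${}_T M_R$ be a biseparable bimodule. If $T$ is a semisimple ring, then $R$ is a semisimple ring, and conversely. -/
open MulOpposite

section BimodulePrelims

universe u v w

variable {T : Type u} {R : Type v} {M : Type w} [Ring T] [Ring R]
variable [AddCommGroup M] [Module T M] [Module Rᵐᵒᵖ M] [SMulCommClass T Rᵐᵒᵖ M]

/-- The left dual `*M = Hom(_T M, _T T)` of a `(T,R)`-bimodule `M`. -/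
abbrev LDual (T : Type*) [Ring T] (M : Type*) [AddCommGroup M] [Module T M] :=
  M →ₗ[T] T

/-- The right dual `M^* = Hom(M_R, R_R)` of a `(T,R)`-bimodule `M`. -/
abbrev RDual (R : Type*) [Ring R] (M : Type*) [AddCommGroup M] [Module Rᵐᵒᵖ M] :=
  M →ₗ[Rᵐᵒᵖ] R

/-- The left `R`-action on `*M`: `(r·f)(m) = f(m·r)`. -/
def LDual.lR (r : R) (f : LDual T M) : LDual T M where
  toFun m := f (op r • m)
  map_add' a b := by show f (op r • (a + b)) = _; rw [smul_add, map_add]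
  map_smul' t m := by
    show f (op r • t • m) = t • f (op r • m)
    rw [← smul_comm t (op r) m, map_smul]

/-- The right `T`-action on `*M`: `(f·t)(m) = f(m) t`. -/
def LDual.rT (t : T) (f : LDual T M) : LDual T M where
  toFun m := f m * t
  map_add' a b := by show f (a + b) * t = _; rw [map_add, add_mul]
  map_smul' s m := by
    show f (s • m) * t = s • (f m * t)
    rw [map_smul, smul_eq_mul, smul_eq_mul, mul_assoc]

/-- The left `R`-action on `M^*`: `(r·h)(m) = r h(m)`. -/
def RDual.lR (r : R) (h : RDual R M) : RDual R M where
  toFun m := r * h m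
  map_add' a b := by show r * h (a + b) = _; rw [map_add, mul_add]
  map_smul' s m := by
    show r * h (s • m) = s • (r * h m)
    rw [map_smul, MulOpposite.smul_eq_mul_unop, MulOpposite.smul_eq_mul_unop, mul_assoc]

/-- The right `T`-action on `M^*`: `(h·t)(m) = h(t·m)`. -/
def RDual.rT (t : T) (h : RDual R M) : RDual R M where
  toFun m := h (t • m)
  map_add' a b := by show h (t • (a + b)) = _; rw [smul_add, map_add]
  map_smul' s m := by
    show h (t • s • m) = s • h (t • m)
    rw [smul_comm t s m, map_smul]

variable (T R M) in
/-- `M` is a separable bimodule (`T` is `M`-separable over `R`): there is an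
`M`-separability element `e = ∑ᵢ mᵢ ⊗ fᵢ ∈ M ⊗_R *M` with `∑ᵢ (mᵢ)fᵢ = 1_T`
and `t·e = e·t` for all `t`, centrality in the tensor product over `R` being
detected by all `R`-balanced biadditive maps. -/
def IsSepBimod : Prop :=
  ∃ (n : ℕ) (m : Fin n → M) (f : Fin n → LDual T M),
    (∑ i, f i (m i)) = 1 ∧
    ∀ (Z : Type (max u v w)) [AddCommGroup Z] (b : M → LDual T M → Z),
      (∀ x y g, b (x + y) g = b x g + b y g) →
      (∀ x g g', b x (g + g') = b x g + b x g') →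
      (∀ (r : R) x g, b (op r • x) g = b x (LDual.lR r g)) →
      ∀ t : T, (∑ i, b (t • m i) (f i)) = ∑ i, b (m i) (LDual.rT t (f i))

variable (T R M) in
/-- `M^*` is a separable bimodule: the evaluation `M^* ⊗_T M → R`, `h ⊗ m ↦ h(m)`,
splits as an `R`-bimodule map, i.e. there is `e = ∑ᵢ hᵢ ⊗ mᵢ ∈ M^* ⊗_T M`
with `∑ᵢ hᵢ(mᵢ) = 1_R` which is `R`-central (centrality in the tensor product
over `T` being detected by all `T`-balanced biadditive maps). -/
def IsSepRDual : Prop :=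
  ∃ (n : ℕ) (h : Fin n → RDual R M) (m : Fin n → M),
    (∑ i, h i (m i)) = 1 ∧
    ∀ (Z : Type (max u v w)) [AddCommGroup Z] (b : RDual R M → M → Z),
      (∀ x y g, b (x + y) g = b x g + b y g) →
      (∀ x g g', b x (g + g') = b x g + b x g') →
      (∀ (t : T) x g, b (RDual.rT t x) g = b x (t • g)) →
      ∀ r : R, (∑ i, b (RDual.lR r (h i)) (m i)) = ∑ i, b (h i) (op r • m i)

/-- A module is finitely generated projective. -/
def IsFGProj (A N : Type*) [Ring A] [AddCommGroup N] [Module A N] : Prop :=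
  Module.Finite A N ∧ Module.Projective A N

variable (T R M) in
/-- `M` is a biseparable `(T,R)`-bimodule: `_T M` and `M_R` are finitely generated
projective and both `M` and `M^*` are separable bimodules. -/
def IsBisep : Prop :=
  IsFGProj T M ∧ IsFGProj Rᵐᵒᵖ M ∧ IsSepBimod T R M ∧ IsSepRDual T R M

variable (T R M) in
/-- `M` is a Frobenius `(T,R)`-bimodule: `_T M` and `M_R` are finitely generated
projective and `*M ≅ M^*` as `(R,T)`-bimodules. -/
def IsFrobBimod : Prop :=
  IsFGProj T M ∧ IsFGProj Rᵐᵒᵖ M ∧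
  ∃ φ : RDual R M ≃+ LDual T M,
    (∀ (r : R) (h : RDual R M), φ (RDual.lR r h) = LDual.lR r (φ h)) ∧
    (∀ (t : T) (h : RDual R M), φ (RDual.rT t h) = LDual.rT t (φ h))

end BimodulePrelims

/-!
Let `P` be an `(A, B)`-bimodule with `_A P` projective and separability element
`∑ pᵢ ⊗ fᵢ ∈ P ⊗_B *P`. If `B` is semisimple, every left ideal `L` of `A` is a direct summand:
postcomposition with `A → A ⧸ L` is a surjection `Hom_A(P, A) → Hom_A(P, A ⧸ L)` of left
`B`-modules, so it has a `B`-linear section `σ`, and `y ↦ ∑ σ(fᵢ(-) • y)(pᵢ)` is a section of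
`A → A ⧸ L`; it is `A`-linear precisely because the separability element is central.
Applied to `M` this gives `R` semisimple ⇒ `T` semisimple. For the converse apply it to the
`(R, T)`-bimodule `M^*`: it is projective over `R` since `M_R` is finitely generated projective,
and the separability of `M^*` supplies the element `∑ hᵢ ⊗ ev_{mᵢ} ∈ M^* ⊗_T *(M^*)`.
-/

section PrecompModule

variable {A P : Type*} [Ring A] [AddCommGroup P] [Module A P]

def MulOpposite.toDomMulAct (C : Type*) [Ring C] : Cᵐᵒᵖ →+* Cᵈᵐᵃ where
  toFun c := DomMulAct.mk c.unop
  map_one' := rfl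
  map_mul' _ _ := rfl
  map_zero' := rfl
  map_add' _ _ := rfl

abbrev LinearMap.precompModule (C N : Type*) [Ring C] [Module C P] [SMulCommClass A C P]
    [AddCommGroup N] [Module A N] : Module Cᵐᵒᵖ (P →ₗ[A] N) :=
  Module.compHom _ (MulOpposite.toDomMulAct C)

end PrecompModule

theorem isSemisimpleModule_of_forall_exists_rightInverse_mkQ {A X : Type*} [Ring A]
    [AddCommGroup X] [Module A X]
    (h : ∀ L : Submodule A X, ∃ s : (X ⧸ L) →ₗ[A] X, L.mkQ ∘ₗ s = LinearMap.id) :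
    IsSemisimpleModule A X := by
  refine (isSemisimpleModule_iff A X).2 ⟨fun L => ?_⟩
  obtain ⟨s, hs⟩ := h L
  have hidem : IsIdempotentElem (s ∘ₗ L.mkQ) := by
    rw [IsIdempotentElem, Module.End.mul_eq_comp, LinearMap.comp_assoc,
      ← LinearMap.comp_assoc L.mkQ, hs, LinearMap.id_comp]
  have hker : LinearMap.ker (s ∘ₗ L.mkQ) = L := by
    rw [LinearMap.ker_comp, LinearMap.ker_eq_bot_of_inverse hs, Submodule.comap_bot,
      Submodule.ker_mkQ]
  exact ⟨_, hker ▸ (LinearMap.IsIdempotentElem.isCompl hidem).symm⟩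

namespace LinearMap

variable {R S M₁ M : Type*} [Semiring R] [Semiring S] [AddCommMonoid M₁] [Module R M₁]
  [AddCommMonoid M] [Module R M] [Module R S] [Module S M] [IsScalarTower R S M]

theorem smulRight_add (f : M₁ →ₗ[R] S) (x y : M) :
    f.smulRight (x + y) = f.smulRight x + f.smulRight y :=
  ext fun _ => smul_add _ _ _

theorem add_smulRight (f g : M₁ →ₗ[R] S) (x : M) :
    (f + g).smulRight x = f.smulRight x + g.smulRight x :=
  ext fun _ => add_smul _ _ _

end LinearMap

section Transfer

universe u v w

variable {A : Type u} {B : Type v} {P : Type w} [Ring A] [Ring B] [AddCommGroup P] [Module A P]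
  [Module Bᵐᵒᵖ P] [SMulCommClass A Bᵐᵒᵖ P]

abbrev LinearMap.precompOpModule (N : Type*) [AddCommGroup N] [Module A N] :
    Module B (P →ₗ[A] N) :=
  letI := LinearMap.precompModule (A := A) (P := P) Bᵐᵒᵖ N
  Module.compHom _ (RingEquiv.opOp B).toRingHom

attribute [local instance] LinearMap.precompOpModule

theorem LinearMap.exists_precompOpModule_rightInverse [Module.Projective A P] [IsSemisimpleRing B]
    {X Y : Type*} [AddCommGroup X] [Module A X] [AddCommGroup Y] [Module A Y]
    (π : X →ₗ[A] Y) (hπ : Function.Surjective π) :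
    ∃ σ : (P →ₗ[A] Y) →ₗ[B] (P →ₗ[A] X), ∀ g, π ∘ₗ σ g = g := by
  let πₗ : (P →ₗ[A] X) →ₗ[B] (P →ₗ[A] Y) :=
    { toFun := π.comp
      map_add' _ _ := LinearMap.comp_add _ _ π
      map_smul' _ _ := rfl }
  have hπₗ : Function.Surjective πₗ := fun g => Module.projective_lifting_property π g hπ
  have := Module.projective_of_isSemisimpleRing B (P →ₗ[A] Y)
  obtain ⟨σ, hσ⟩ := πₗ.exists_rightInverse_of_surjective (LinearMap.range_eq_top.2 hπₗ)
  exact ⟨σ, LinearMap.congr_fun hσ⟩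

theorem IsSepBimod.exists_rightInverse_mkQ [Module.Projective A P] [IsSemisimpleRing B]
    (hsep : IsSepBimod A B P) (L : Submodule A A) :
    ∃ s : (A ⧸ L) →ₗ[A] A, L.mkQ ∘ₗ s = LinearMap.id := by
  obtain ⟨n, p, f, hsum, hcentral⟩ := hsep
  obtain ⟨σ, hσ⟩ := LinearMap.exists_precompOpModule_rightInverse (B := B) (P := P) L.mkQ
    L.mkQ_surjective
  let s (y : A ⧸ L) : A := ∑ i, σ ((f i).smulRight y) (p i)
  have s_add (y z : A ⧸ L) : s (y + z) = s y + s z := by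
    simp only [s, LinearMap.smulRight_add, map_add, LinearMap.add_apply, Finset.sum_add_distrib]
  have s_smul (t : A) (y : A ⧸ L) : s (t • y) = t • s y := by
    have hcomm := hcentral (ULift.{max v w} A)
      (fun x φ => AddEquiv.ulift.symm (σ (φ.smulRight y) x))
      (fun x x' φ => by rw [map_add, map_add])
      (fun x φ φ' => by rw [LinearMap.add_smulRight, map_add, LinearMap.add_apply, map_add])
      (fun r x φ => by
        rw [show (LDual.lR r φ).smulRight y = r • φ.smulRight y from rfl, map_smul σ]; rfl) t
    simp only [← map_sum, AddEquiv.apply_eq_iff_eq, map_smul, ← Finset.smul_sum] at hcomm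
    have hrT (φ : LDual A P) : (LDual.rT t φ).smulRight y = φ.smulRight (t • y) :=
      LinearMap.ext fun _ => mul_smul _ _ _
    simpa only [s, hrT] using hcomm.symm
  refine ⟨⟨⟨s, s_add⟩, s_smul⟩, LinearMap.ext fun y => ?_⟩
  have hσ' (g : P →ₗ[A] A ⧸ L) (x : P) : L.mkQ (σ g x) = g x := LinearMap.congr_fun (hσ g) x
  simp [s, hσ', ← Finset.sum_smul, hsum]

theorem IsSepBimod.isSemisimpleRing [Module.Projective A P] [IsSemisimpleRing B]
    (hsep : IsSepBimod A B P) : IsSemisimpleRing A :=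
  isSemisimpleModule_of_forall_exists_rightInverse_mkQ hsep.exists_rightInverse_mkQ

end Transfer

theorem RDual.projective {R M : Type*} [Ring R] [AddCommGroup M] [Module Rᵐᵒᵖ M]
    [Module.Finite Rᵐᵒᵖ M] [Module.Projective Rᵐᵒᵖ M] : Module.Projective R (RDual R M) := by
  obtain ⟨n, f, g, -, -, hfg⟩ := Module.Finite.exists_comp_eq_id_of_projective Rᵐᵒᵖ M
  have : Module.Projective R ((Fin n → Rᵐᵒᵖ) →ₗ[Rᵐᵒᵖ] R) :=
    .of_equiv ((LinearEquiv.piCongrRight fun _ => (LinearMap.ringLmapEquivSelf Rᵐᵒᵖ R R).symm) ≪≫ₗ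
      LinearMap.lsum Rᵐᵒᵖ (fun _ => Rᵐᵒᵖ) R)
  exact .of_split (LinearMap.lcomp R R f) (LinearMap.lcomp R R g)
    (LinearMap.ext fun h => (congrArg h.comp hfg).trans h.comp_id)

section RightDual

variable {T R M : Type*} [Ring T] [Ring R] [AddCommGroup M] [Module T M] [Module Rᵐᵒᵖ M]
  [SMulCommClass T Rᵐᵒᵖ M]

-- `op t • h` is `RDual.rT t h` definitionally.
instance : Module Tᵐᵒᵖ (RDual R M) :=
  haveI := SMulCommClass.symm T Rᵐᵒᵖ M
  LinearMap.precompModule T R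

instance : SMulCommClass R Tᵐᵒᵖ (RDual R M) :=
  ⟨fun _ _ _ => rfl⟩

theorem IsSepRDual.isSepBimod (hsep : IsSepRDual T R M) : IsSepBimod R T (RDual R M) := by
  obtain ⟨n, h, m, hsum, hcentral⟩ := hsep
  let ev : M →+ LDual R (RDual R M) := LinearMap.applyₗ' R
  refine ⟨n, h, fun i => ev (m i), hsum, fun Z _ b hadd₁ hadd₂ hbal r => ?_⟩
  have hcomm := hcentral Z (fun g x => b g (ev x)) (fun g g' x => hadd₁ _ _ _)
    (fun g x x' => by simp only [map_add]; exact hadd₂ _ _ _)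
    (fun t g x => hbal t g (ev x)) r
  have hrT (x : M) : LDual.rT r (ev x) = ev (op r • x) := LinearMap.ext fun g => by
    simp [ev, LDual.rT]
  have hlR (g : RDual R M) : RDual.lR r g = r • g := rfl
  simpa only [hrT, hlR] using hcomm

end RightDual

/-- If `M` is a biseparable `(T,R)`-bimodule, then `T` is semisimple if and
only if `R` is semisimple. -/
theorem biseparable_stmt6 {T R M : Type*} [Ring T] [Ring R]
    [AddCommGroup M] [Module T M] [Module Rᵐᵒᵖ M] [SMulCommClass T Rᵐᵒᵖ M]
    (hbisep : IsBisep T R M) :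
    IsSemisimpleRing T ↔ IsSemisimpleRing R := by
  obtain ⟨⟨-, hTproj⟩, ⟨hRfin, hRproj⟩, hsepM, hsepD⟩ := hbisep
  have := RDual.projective (R := R) (M := M)
  exact ⟨fun _ => hsepD.isSepBimod.isSemisimpleRing, fun _ => hsepM.isSemisimpleRing⟩
end

section
/- A ring extension $R/S$ is split (i.e., there is an $(S,S)$-bimodule projection $E: R \to S$ with $E|_S = \mathrm{id}$) if and only if the bimodule ${}_S R_R$ is a separable bimodule. -/
variable {R : Type*} [Ring R]

/-- The left dual `*(_S R_R) = Hom(_S R, _S S)` of the bimodule `_S R_R`: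
additive maps `R → S` that are left `S`-linear, as an additive subgroup of `R →+ S`. -/
def LeftSDual (S : Subring R) : AddSubgroup (R →+ S) where
  carrier := {f | ∀ (s : S) (a : R), f ((s : R) * a) = s * f a}
  add_mem' := by intro f g hf hg s a; simp [hf s a, hg s a, mul_add]
  zero_mem' := by intro s a; simp
  neg_mem' := by intro f hf s a; simp [hf s a]

/-- The left `R`-action on `Hom(_S R, _S S)`: `(r·f)(m) = f(m r)`. -/
def LeftSDual.lR {S : Subring R} (r : R) (f : LeftSDual S) : LeftSDual S :=
  ⟨(f : R →+ S).comp (AddMonoidHom.mulRight r), fun s a => by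
    simpa [mul_assoc] using f.2 s (a * r)⟩

/-- The right `S`-action on `Hom(_S R, _S S)`: `(f·s)(m) = f(m) s`. -/
def LeftSDual.rS {S : Subring R} (s : S) (f : LeftSDual S) : LeftSDual S :=
  ⟨(AddMonoidHom.mulRight s).comp (f : R →+ S), fun t a => by
    simp [f.2 t a, mul_assoc]⟩

/-!
A split `E` gives the separability element `1 ⊗ E`: it commutes with `S` because
`s ⊗ E = 1 ⊗ (s·E)` by balancedness, and `s·E = E·s` is right `S`-linearity of `E`.
Conversely a separability element `∑ᵢ mᵢ ⊗ fᵢ` yields `E r = ∑ᵢ fᵢ (r mᵢ)`; right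
`S`-linearity of `E` is centrality tested on the balanced maps `(a, g) ↦ c (g (r a))`
for characters `c` of `S`, which separate the points of `S` (testing with `S` itself is not
possible, since the test groups live in an arbitrary universe).
-/

universe u

namespace LeftSDual

variable {S : Subring R}

/-- `∑ᵢ mᵢ ⊗ fᵢ ∈ R ⊗_R Hom(_S R, _S S)` commutes with `S`, tested on all `R`-balanced
biadditive maps out of `R × Hom(_S R, _S S)`. -/
def IsCentralTensor {n : ℕ} (m : Fin n → R) (f : Fin n → LeftSDual S) : Prop :=
  ∀ (Z : Type u) [AddCommGroup Z] (b : R → LeftSDual S → Z),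
    (∀ a a' g, b (a + a') g = b a g + b a' g) →
    (∀ a g g', b a (g + g') = b a g + b a g') →
    (∀ (r : R) (a : R) (g : LeftSDual S), b (a * r) g = b a (lR r g)) →
    ∀ s : S, (∑ i, b ((s : R) * m i) (f i)) = ∑ i, b (m i) (rS s (f i))

theorem lR_eq_rS {E : LeftSDual S} {s : S}
    (hE : ∀ r, (E : R →+ S) (r * s) = (E : R →+ S) r * s) :
    lR (s : R) E = rS s E :=
  Subtype.ext (AddMonoidHom.ext hE)

theorem isCentralTensor_one_tmul {E : LeftSDual S}
    (hE : ∀ (s : S) (r : R), (E : R →+ S) (r * s) = (E : R →+ S) r * s) :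
    IsCentralTensor (fun _ : Fin 1 => (1 : R)) (fun _ => E) := by
  intro Z _ b _ _ hbal s
  simp only [Fin.sum_univ_one]
  rw [mul_one, ← one_mul (s : R), hbal, lR_eq_rS (hE s)]

/-- `r ↦ r · ∑ᵢ mᵢ ⊗ fᵢ` followed by evaluation `R ⊗_R Hom(_S R, _S S) → S`. -/
def contraction {n : ℕ} (m : Fin n → R) (f : Fin n → LeftSDual S) : R →+ S :=
  ∑ i, (f i : R →+ S).comp (AddMonoidHom.mulRight (m i))

variable {n : ℕ} {m : Fin n → R} {f : Fin n → LeftSDual S}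

theorem contraction_apply (r : R) : contraction m f r = ∑ i, (f i : R →+ S) (r * m i) := by
  simp [contraction]

theorem contraction_mul_left (s : S) (r : R) :
    contraction m f ((s : R) * r) = s * contraction m f r := by
  simp only [contraction_apply, Finset.mul_sum, mul_assoc]
  exact Finset.sum_congr rfl fun i _ => (f i).2 s (r * m i)

theorem contraction_coe (hone : ∑ i, (f i : R →+ S) (m i) = 1) (s : S) :
    contraction m f s = s := by
  rw [← mul_one (s : R), contraction_mul_left, contraction_apply]
  simp [hone]

theorem contraction_mul_right (hcent : IsCentralTensor.{u} m f) (s : S) (r : R) :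
    contraction m f (r * s) = contraction m f r * s := by
  rw [← sub_eq_zero]
  refine CharacterModule.eq_zero_of_character_apply fun c => ?_
  have key := hcent _ (fun a g => AddEquiv.ulift.symm (c ((g : R →+ S) (r * a))))
    (fun a a' g => by simp only [mul_add, map_add])
    (fun a g g' => by simp only [AddSubgroup.coe_add, AddMonoidHom.add_apply, map_add])
    (fun r' a g => by simp only [lR, AddMonoidHom.comp_apply, AddMonoidHom.coe_mulRight,
      mul_assoc])
    s
  simp only [← map_sum, EmbeddingLike.apply_eq_iff_eq, rS, AddMonoidHom.comp_apply,
    AddMonoidHom.coe_mulRight] at key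
  rw [map_sub, sub_eq_zero, contraction_apply, contraction_apply, Finset.sum_mul]
  simpa only [mul_assoc] using key

end LeftSDual

open LeftSDual in
/-- A ring extension `R/S` is split — there is an `(S,S)`-bimodule projection
`E : R → S` with `E|_S = id` — if and only if the bimodule `_S R_R` is a
separable bimodule, i.e. there is `e = ∑ᵢ mᵢ ⊗ fᵢ ∈ R ⊗_R Hom(_S R, _S S)`
with `∑ᵢ (mᵢ)fᵢ = 1_S` which is `S`-central (centrality in the tensor product
over `R` being detected by all `R`-balanced biadditive maps). -/
theorem biseparable_stmt11 (S : Subring R) :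
    (∃ E : R →+ S, (∀ s : S, E (s : R) = s) ∧
      (∀ (s : S) (r : R), E ((s : R) * r) = s * E r) ∧
      (∀ (s : S) (r : R), E (r * (s : R)) = E r * s)) ↔
    (∃ (n : ℕ) (m : Fin n → R) (f : Fin n → LeftSDual S),
      (∑ i, (f i : R →+ S) (m i)) = 1 ∧
      ∀ (Z : Type*) [AddCommGroup Z] (b : R → LeftSDual S → Z),
        (∀ a a' g, b (a + a') g = b a g + b a' g) →
        (∀ a g g', b a (g + g') = b a g + b a g') →
        (∀ (r : R) (a : R) (g : LeftSDual S), b (a * r) g = b a (LeftSDual.lR r g)) →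
        ∀ s : S, (∑ i, b ((s : R) * m i) (f i)) = ∑ i, b (m i) (LeftSDual.rS s (f i))) := by
  constructor
  · rintro ⟨E, hE_coe, hE_left, hE_right⟩
    exact ⟨1, fun _ => 1, fun _ => ⟨E, hE_left⟩, by simpa using hE_coe 1,
      isCentralTensor_one_tmul hE_right⟩
  · rintro ⟨n, m, f, hone, hcent⟩
    exact ⟨contraction m f, contraction_coe hone, contraction_mul_left,
      contraction_mul_right hcent⟩
end

section
/- Let $R/S$ be a separable ring extension with separability element $\sum_i x_i \otimes y_i \in R \otimes_S R$. Then the map $\mathcal{E} = \mathrm{End}(R_S) \to R$ given by $f \mapsto \sum_i f(x_i) y_i$ is an $R$-bimodule projection splitting the inclusion $R \hookrightarrow \mathrm{End}(R_S)$ by left multiplications; hence the extension $\mathrm{End}(R_S)/R$ is split. -/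
/-! The identity `p(f ∘ λ_r) = p(f) r` is the centrality of `∑ᵢ xᵢ ⊗ yᵢ` tested against the
`S`-balanced map `(a, c) ↦ f(a) c`, which is where right `S`-linearity of `f` enters; the other
claims are direct computations, using `∑ᵢ xᵢ yᵢ = 1` for `p(λ_r) = r`. Centrality is only
assumed for balanced maps into groups of one fixed universe, so it is first transferred to `R`
through the characters `R → ℚ/ℤ`, which separate points. -/

open Finset

section Separability

variable {R : Type*} [Ring R] {S : Subring R} {n : ℕ} {x y : Fin n → R}

theorem balanced_sum_comm_of_addCircle
    (hcas : ∀ b : R →+ R →+ ULift.{v} (AddCircle (1 : ℚ)),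
      (∀ (s : S) (a c : R), b (a * s) c = b a (s * c)) →
      ∀ r : R, (∑ i, b (r * x i) (y i)) = ∑ i, b (x i) (y i * r))
    {M : Type*} [AddCommGroup M] (b : R →+ R →+ M)
    (hb : ∀ (s : S) (a c : R), b (a * s) c = b a (s * c)) (r : R) :
    (∑ i, b (r * x i) (y i)) = ∑ i, b (x i) (y i * r) := by
  rw [← sub_eq_zero]
  refine CharacterModule.eq_zero_of_character_apply fun χ => ?_
  let χ' : M →+ ULift.{v} (AddCircle (1 : ℚ)) := AddEquiv.ulift.symm.toAddMonoidHom.comp χ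
  have hχ := hcas ((AddMonoidHom.compHom χ').comp b) (fun s a c => by simp [hb]) r
  simp only [AddMonoidHom.comp_apply, AddMonoidHom.compHom_apply_apply, ← map_sum] at hχ
  rw [map_sub, sub_eq_zero]
  exact AddEquiv.ulift.symm.injective hχ

theorem sum_map_mul_left_mul_eq
    (hcas : ∀ b : R →+ R →+ ULift.{v} (AddCircle (1 : ℚ)),
      (∀ (s : S) (a c : R), b (a * s) c = b a (s * c)) →
      ∀ r : R, (∑ i, b (r * x i) (y i)) = ∑ i, b (x i) (y i * r))
    (f : R →+ R) (hf : ∀ (a : R) (s : S), f (a * s) = f a * s) (r : R) :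
    (∑ i, f (r * x i) * y i) = (∑ i, f (x i) * y i) * r := by
  have h := balanced_sum_comm_of_addCircle hcas (AddMonoidHom.mul.comp f)
    (fun s a c => by simp [hf, mul_assoc]) r
  simpa [Finset.sum_mul, mul_assoc] using h

end Separability

/-- Let `R/S` be a separable ring extension with separability element
`∑ᵢ xᵢ ⊗ yᵢ ∈ R ⊗_S R` (`∑ᵢ xᵢ yᵢ = 1`, and `R`-centrality encoded via all
`S`-balanced biadditive maps).  Then the map `p : End(R_S) → R`,
`p(f) = ∑ᵢ f(xᵢ) yᵢ`, is an `R`-bimodule projection splitting the embedding of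
`R` into `End(R_S)` by left multiplications: `p` is additive, `p(λ_r) = r` for the
left multiplication `λ_r`, and `p(λ_r ∘ f) = r p(f)`, `p(f ∘ λ_r) = p(f) r` for
every right `S`-linear `f`.  Hence the extension `End(R_S)/R` is split. -/
theorem biseparable_stmt12 {R : Type*} [Ring R] (S : Subring R)
    (n : ℕ) (x y : Fin n → R)
    (hunit : (∑ i, x i * y i) = 1)
    (hcas : ∀ (Z : Type*) [AddCommGroup Z] (b : R →+ R →+ Z),
      (∀ (s : S) (a c : R), b (a * s) c = b a (s * c)) →
      ∀ r : R, (∑ i, b (r * x i) (y i)) = ∑ i, b (x i) (y i * r)) :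
    (∀ f g : R →+ R,
      (∑ i, (f + g) (x i) * y i) = (∑ i, f (x i) * y i) + ∑ i, g (x i) * y i) ∧
    (∀ r : R, (∑ i, AddMonoidHom.mulLeft r (x i) * y i) = r) ∧
    (∀ f : R →+ R, (∀ (a : R) (s : S), f (a * s) = f a * s) →
      ∀ r : R,
        (∑ i, ((AddMonoidHom.mulLeft r).comp f) (x i) * y i) = r * ∑ i, f (x i) * y i ∧
        (∑ i, (f.comp (AddMonoidHom.mulLeft r)) (x i) * y i) = (∑ i, f (x i) * y i) * r) := by
  refine ⟨fun f g => ?_, fun r => ?_, fun f hf r => ⟨?_, ?_⟩⟩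
  · simp only [AddMonoidHom.add_apply, add_mul, sum_add_distrib]
  · simp only [AddMonoidHom.coe_mulLeft, mul_assoc, ← mul_sum, hunit, mul_one]
  · simp only [AddMonoidHom.comp_apply, AddMonoidHom.coe_mulLeft, mul_assoc, mul_sum]
  · exact sum_map_mul_left_mul_eq (hcas _) f hf r
end

section
/- Let $R/S$ be a biseparable extension (split, separable, with $R_S$ and ${}_S R$ finitely generated projective). Then the right $R$-module $R$ is isomorphic to a direct summand of a finite direct sum of copies of $R^* = \mathrm{Hom}(R_S, S_S)$; in particular $R^*_R$ is a generator in the category of right $R$-modules. -/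
open MulOpposite

variable {R : Type*} [Ring R]

/-- `R^* = Hom(R_S, S_S)`: additive maps `R → S` that are right `S`-linear. -/
def RightSDual (S : Subring R) : AddSubgroup (R →+ S) where
  carrier := {f | ∀ (a : R) (s : S), f (a * (s : R)) = f a * s}
  add_mem' := by intro f g hf hg a s; simp [hf a s, hg a s, add_mul]
  zero_mem' := by intro a s; simp
  neg_mem' := by intro f hf a s; simp [hf a s]

/-- The natural right `R`-action on `R^* = Hom(R_S, S_S)`: `(f · r)(x) = f(r x)`. -/
def RightSDual.rsmul {S : Subring R} (r : Rᵐᵒᵖ) (f : RightSDual S) : RightSDual S :=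
  ⟨(f : R →+ S).comp (AddMonoidHom.mulLeft r.unop), fun a s => by
    simpa [mul_assoc] using f.2 (r.unop * a) s⟩

@[simp] lemma RightSDual.rsmul_apply {S : Subring R} (r : Rᵐᵒᵖ) (f : RightSDual S)
    (a : R) : ((RightSDual.rsmul r f : RightSDual S) : R →+ S) a
      = (f : R →+ S) (r.unop * a) := rfl

instance (S : Subring R) : Module Rᵐᵒᵖ (RightSDual S) where
  smul := RightSDual.rsmul
  one_smul f := Subtype.ext (AddMonoidHom.ext fun a => by
    show (f : R →+ S) ((1 : Rᵐᵒᵖ).unop * a) = (f : R →+ S) a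
    rw [unop_one, one_mul])
  mul_smul r r' f := Subtype.ext (AddMonoidHom.ext fun a => by
    show (f : R →+ S) ((r * r').unop * a)
      = (f : R →+ S) (r'.unop * (r.unop * a))
    rw [unop_mul, mul_assoc])
  smul_zero r := Subtype.ext (AddMonoidHom.ext fun a => rfl)
  smul_add r f g := Subtype.ext (AddMonoidHom.ext fun a => rfl)
  add_smul r r' f := Subtype.ext (AddMonoidHom.ext fun a => by
    show (f : R →+ S) ((r + r').unop * a)
      = (f : R →+ S) (r.unop * a) + (f : R →+ S) (r'.unop * a)
    rw [unop_add, add_mul, map_add])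
  zero_smul f := Subtype.ext (AddMonoidHom.ext fun a => by
    show (f : R →+ S) ((0 : Rᵐᵒᵖ).unop * a) = 0
    rw [unop_zero, zero_mul, map_zero])

universe uu vv

/-- Transfer the Casimir (separability) identity, stated for bilinear forms valued in
abelian groups of an arbitrary fixed universe, to the identity in `R` itself, by testing
against `ℚ ⧸ ℤ`-valued characters (which separate points and live in `Type 0`). -/
private lemma casimir_key {R : Type uu} [Ring R] (S : Subring R) {n : ℕ} (X Y : Fin n → R)
    (hcas : ∀ (Z : Type vv) [AddCommGroup Z] (b : R →+ R →+ Z),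
      (∀ (s : S) (a c : R), b (a * (s : R)) c = b a ((s : R) * c)) →
      ∀ r : R, (∑ i, b (r * X i) (Y i)) = ∑ i, b (X i) (Y i * r))
    (f : RightSDual S) (r : R) :
    (∑ i, ((f : R →+ S) (r * X i) : R) * Y i)
      = ∑ i, ((f : R →+ S) (X i) : R) * (Y i * r) := by
  have hup : ∀ x y : AddCircle (1 : ℚ),
      ULift.up.{vv} (x + y) = ULift.up.{vv} x + ULift.up.{vv} y := fun _ _ => rfl
  have hzero : ULift.up.{vv} (0 : AddCircle (1 : ℚ)) = 0 := rfl
  have dsum : ∀ (g : Fin n → AddCircle (1 : ℚ)),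
      ULift.down.{vv} (∑ i, ULift.up.{vv} (g i)) = ∑ i, g i := by
    intro g
    let D : ULift.{vv} (AddCircle (1 : ℚ)) →+ AddCircle (1 : ℚ) :=
      { toFun := ULift.down, map_zero' := rfl, map_add' := fun _ _ => rfl }
    exact map_sum D (fun i => ULift.up.{vv} (g i)) Finset.univ
  have hchi : ∀ χ : R →+ AddCircle (1 : ℚ),
      χ (∑ i, ((f : R →+ S) (r * X i) : R) * Y i)
        = χ (∑ i, ((f : R →+ S) (X i) : R) * (Y i * r)) := by
    intro χ
    let b : R →+ R →+ ULift.{vv} (AddCircle (1 : ℚ)) :=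
      { toFun := fun a =>
          { toFun := fun c => ULift.up (χ (((f : R →+ S) a : R) * c))
            map_zero' := by simp [hzero]
            map_add' := by intro c c'; simp [mul_add, map_add, hup] }
        map_zero' := by ext c; simp [hzero]
        map_add' := by
          intro a a'
          ext c
          show (χ (((f : R →+ S) (a + a') : R) * c))
            = χ (((f : R →+ S) a : R) * c) + χ (((f : R →+ S) a' : R) * c)
          rw [map_add]
          push_cast
          rw [add_mul, map_add] }
    have hbal : ∀ (s : S) (a c : R), b (a * (s : R)) c = b a ((s : R) * c) := by
      intro s a c
      show ULift.up (χ (((f : R →+ S) (a * (s : R)) : R) * c))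
        = ULift.up (χ (((f : R →+ S) a : R) * ((s : R) * c)))
      rw [f.2 a s]
      push_cast
      rw [mul_assoc]
    have h : (∑ i, ULift.up.{vv} (χ (((f : R →+ S) (r * X i) : R) * Y i)))
        = ∑ i, ULift.up.{vv} (χ (((f : R →+ S) (X i) : R) * (Y i * r))) := hcas _ b hbal r
    have h' := congrArg ULift.down.{vv} h
    rw [dsum, dsum] at h'
    rw [map_sum, map_sum]
    exact h'
  have hz : ∀ c : CharacterModule R,
      c ((∑ i, ((f : R →+ S) (r * X i) : R) * Y i)
        - (∑ i, ((f : R →+ S) (X i) : R) * (Y i * r))) = 0 := by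
    intro c
    have : (show R →+ AddCircle (1 : ℚ) from c)
        ((∑ i, ((f : R →+ S) (r * X i) : R) * Y i)
          - (∑ i, ((f : R →+ S) (X i) : R) * (Y i * r))) = 0 := by
      rw [map_sub, hchi _, sub_self]
    exact this
  exact sub_eq_zero.mp (CharacterModule.eq_zero_of_character_apply hz)

/-- A biseparable extension `R/S` (split, separable, and two-sided finitely
generated projective — the latter two encoded by dual bases) has the property
that `R_R` is a direct summand of a finite direct sum of copies of
`R^* = Hom(R_S, S_S)` as right `R`-modules; in particular `R^*_R` is a
generator (its trace ideal is all of `R`). -/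
theorem biseparable_stmt13 (S : Subring R)
    -- split:
    (hsplit : ∃ E : R →+ S, (∀ s : S, E (s : R) = s) ∧
      (∀ (s : S) (r : R), E ((s : R) * r) = s * E r) ∧
      (∀ (s : S) (r : R), E (r * (s : R)) = E r * s))
    -- separable:
    (hsep : ∃ (n : ℕ) (x y : Fin n → R),
      (∑ i, x i * y i) = 1 ∧
      ∀ (Z : Type*) [AddCommGroup Z] (b : R →+ R →+ Z),
        (∀ (s : S) (a c : R), b (a * s) c = b a (s * c)) →
        ∀ r : R, (∑ i, b (r * x i) (y i)) = ∑ i, b (x i) (y i * r))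
    -- `R_S` finitely generated projective (dual basis):
    (hfgr : ∃ (n : ℕ) (x : Fin n → R) (f : Fin n → RightSDual S),
      ∀ a : R, (∑ i, x i * ((f i : R →+ S) a : R)) = a)
    -- `_S R` finitely generated projective (dual basis):
    (hfgl : ∃ (n : ℕ) (x : Fin n → R) (g : Fin n → LeftSDual S),
      ∀ a : R, (∑ i, ((g i : R →+ S) a : R) * x i) = a) :
    (∃ (k : ℕ) (u : R →ₗ[Rᵐᵒᵖ] (Fin k → RightSDual S))
        (v : (Fin k → RightSDual S) →ₗ[Rᵐᵒᵖ] R),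
      ∀ a : R, v (u a) = a) ∧
    (∃ (m : ℕ) (g : Fin m → (RightSDual S →ₗ[Rᵐᵒᵖ] R)) (p : Fin m → RightSDual S),
      (∑ i, g i (p i)) = 1) := by
  clear hsplit hfgl
  obtain ⟨n, X, Y, hXY, hcas⟩ := hsep
  obtain ⟨m, Z, F, hF⟩ := hfgr
  -- the "Casimir" right-linearity identity for any f ∈ R^*
  have hcas' : ∀ (f : RightSDual S) (r : R),
      (∑ i, ((f : R →+ S) (r * X i) : R) * Y i)
        = (∑ i, ((f : R →+ S) (X i) : R) * Y i) * r := by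
    intro f r
    rw [casimir_key S X Y hcas f r, Finset.sum_mul]
    exact Finset.sum_congr rfl fun i _ => (mul_assoc _ _ _).symm
  have hsmul : ∀ (r : Rᵐᵒᵖ) (f : RightSDual S) (a : R),
      ((r • f : RightSDual S) : R →+ S) a = (f : R →+ S) (r.unop * a) := fun _ _ _ => rfl
  set ψ : RightSDual S → R := fun f => ∑ i, (((f : R →+ S) (X i) : R)) * Y i with hψdef
  have hψadd : ∀ f g, ψ (f + g) = ψ f + ψ g := by
    intro f g
    simp only [hψdef]
    rw [← Finset.sum_add_distrib]
    refine Finset.sum_congr rfl fun i _ => ?_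
    push_cast [AddSubgroup.coe_add, AddMonoidHom.add_apply]
    rw [add_mul]
  have hψsmul : ∀ (r : Rᵐᵒᵖ) (f : RightSDual S), ψ (r • f) = ψ f * r.unop := by
    intro r f
    simpa [hψdef, hsmul] using hcas' f r.unop
  have hone : (∑ j, Z j * ψ (F j)) = 1 := by
    calc (∑ j, Z j * ψ (F j))
        = ∑ j, ∑ i, Z j * ((((F j : RightSDual S) : R →+ S) (X i) : R) * Y i) := by
          simp [hψdef, Finset.mul_sum]
      _ = ∑ i, ∑ j, (Z j * (((F j : RightSDual S) : R →+ S) (X i) : R)) * Y i := by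
          rw [Finset.sum_comm]
          exact Finset.sum_congr rfl fun i _ => Finset.sum_congr rfl fun j _ =>
            (mul_assoc _ _ _).symm
      _ = ∑ i, (∑ j, Z j * (((F j : RightSDual S) : R →+ S) (X i) : R)) * Y i := by
          simp [Finset.sum_mul]
      _ = ∑ i, X i * Y i := by
          exact Finset.sum_congr rfl fun i _ => by rw [hF (X i)]
      _ = 1 := hXY
  constructor
  · refine ⟨m,
      { toFun := fun a j => (op a) • F j,
        map_add' := by
          intro a a'
          funext j
          show (op (a + a')) • F j = (op a) • F j + (op a') • F j
          rw [op_add, add_smul],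
        map_smul' := by
          intro r a
          funext j
          show (op (r • a)) • F j = r • ((op a) • F j)
          have : (r • a : R) = a * r.unop := rfl
          rw [this, op_mul, op_unop, mul_smul] },
      { toFun := fun h => ∑ j, Z j * ψ (h j),
        map_add' := by
          intro h h'
          show (∑ j, Z j * ψ ((h + h') j)) = (∑ j, Z j * ψ (h j)) + ∑ j, Z j * ψ (h' j)
          rw [← Finset.sum_add_distrib]
          refine Finset.sum_congr rfl fun j _ => ?_
          rw [Pi.add_apply, hψadd, mul_add],
        map_smul' := by
          intro r h
          show (∑ j, Z j * ψ ((r • h) j)) = r • ∑ j, Z j * ψ (h j)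
          have : (r • (∑ j, Z j * ψ (h j)) : R) = (∑ j, Z j * ψ (h j)) * r.unop := rfl
          rw [this, Finset.sum_mul]
          refine Finset.sum_congr rfl fun j _ => ?_
          rw [Pi.smul_apply, hψsmul, mul_assoc] }, ?_⟩
    intro a
    show (∑ j, Z j * ψ ((op a) • F j)) = a
    calc (∑ j, Z j * ψ ((op a) • F j))
        = ∑ j, (Z j * ψ (F j)) * a := by
          refine Finset.sum_congr rfl fun j _ => ?_
          rw [hψsmul, unop_op, mul_assoc]
      _ = (∑ j, Z j * ψ (F j)) * a := (Finset.sum_mul _ _ _).symm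
      _ = a := by rw [hone, one_mul]
  · refine ⟨m, fun j =>
      { toFun := fun f => Z j * ψ f,
        map_add' := by intro f g; show Z j * ψ (f + g) = Z j * ψ f + Z j * ψ g; rw [hψadd, mul_add],
        map_smul' := by
          intro r f
          show Z j * ψ (r • f) = r • (Z j * ψ f)
          have : (r • (Z j * ψ f) : R) = (Z j * ψ f) * r.unop := rfl
          rw [this, hψsmul, mul_assoc] }, F, ?_⟩
    exact hone
end

section
/- Let $k$ be a commutative ring and $R$ a $k$-algebra containing elements $x, y$ with $xy = 1$ but $yx \neq 1$. Let $S = k1 + yRx$ (a subring of $R$). Then $R/S$ is a separable extension, with separability element $x \otimes y \in R \otimes_S R$. -/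
lemma biseparable_aux {k R : Type*} [CommRing k] [Ring R] [Algebra k R]
    (x y : R) (hxy : x * y = 1) (S : Subring R)
    (hS : ∀ a : R, a ∈ S ↔ ∃ (c : k) (r : R), a = algebraMap k R c + y * r * x) :
    ∀ (Z : Type*) [AddCommGroup Z] (b : R →+ R →+ Z),
      (∀ (s : S) (a c : R), b (a * s) c = b a (s * c)) →
      ∀ r : R, b (r * x) y = b x (y * r) := by
  intro Z _ b hb r
  have hs : y * r * x ∈ S := (hS _).2 ⟨0, r, by simp⟩
  have h := hb ⟨_, hs⟩ x y
  simp only [] at h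
  have h1 : x * (y * r * x) = r * x := by
    rw [show x * (y * r * x) = (x * y) * (r * x) by noncomm_ring, hxy, one_mul]
  have h2 : (y * r * x) * y = y * r := by
    rw [mul_assoc, hxy, mul_one]
  rwa [h1, h2] at h

/-- Let `k` be a commutative ring and `R` a `k`-algebra with elements `x, y`
such that `x * y = 1` but `y * x ≠ 1`, and let `S = k·1 + yRx`.  Then `R/S` is a
separable extension, with separability element `x ⊗ y ∈ R ⊗_S R` (i.e. `x ⊗ y`
is `R`-central, as detected by all `S`-balanced biadditive maps, and has image
`x * y = 1` under multiplication). -/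
theorem biseparable_stmt15 {k R : Type*} [CommRing k] [Ring R] [Algebra k R]
    (x y : R) (hxy : x * y = 1) (hyx : y * x ≠ 1)
    (S : Subring R)
    (hS : ∀ a : R, a ∈ S ↔ ∃ (c : k) (r : R), a = algebraMap k R c + y * r * x) :
    (∀ (Z : Type*) [AddCommGroup Z] (b : R →+ R →+ Z),
      (∀ (s : S) (a c : R), b (a * s) c = b a (s * c)) →
      ∀ r : R, b (r * x) y = b x (y * r)) ∧
    IsSeparableExtension S := by
  refine ⟨fun Z _ b hb r => biseparable_aux x y hxy S hS Z b hb r,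
    1, fun _ => x, fun _ => y, by simpa using hxy, ?_⟩
  intro Z _ b hb r
  simpa using biseparable_aux x y hxy S hS Z b hb r
end

section
/- Let $k$ be a commutative ring, $V$ a free $k$-module of countably infinite rank, $R = \mathrm{End}_k(V)$, and let $x = \sum_{n \geq 1} e_{n,n+1}$, $y = \sum_{n \geq 1} e_{n+1,n}$ (shift operators, so $xy = 1$, $yx \neq 1$). Let $S = k 1_R + yRx$ and $e = yx$. Then the extension $R/S$ is split: the map $E: R \to S$ given by $E(A) = \pi(A) \cdot (1-e) + e A e$, where $\pi(A) \in k$ is the $(1,1)$-entry of $A$, is an $S$-bimodule projection onto $S$. -/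
noncomputable section

variable (k : Type*) [CommRing k] [Nontrivial k]

/-- `V`: a free `k`-module of countably infinite rank. -/
abbrev V := ℕ →₀ k

/-- The shift `y = ∑ₙ e_{n+1,n}`, sending the basis vector `eₙ` to `e_{n+1}`. -/
def yShift : Module.End k (V k) := Finsupp.lmapDomain k k Nat.succ

/-- The shift `x = ∑ₙ e_{n,n+1}`, sending `e_{n+1}` to `eₙ` and `e₀` to `0`. -/
def xShift : Module.End k (V k) := Finsupp.lcomapDomain Nat.succ Nat.succ_injective

/-- The `(1,1)`-entry of an operator `A`. -/
def entry00 (A : Module.End k (V k)) : k := (A (Finsupp.single 0 1)) 0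

/-- The projection `E(A) = π(A) • (1 - e) + e A e`, where `e = yx` and
`π(A)` is the `(1,1)`-entry of `A`. -/
def Eproj (A : Module.End k (V k)) : Module.End k (V k) :=
  entry00 k A • (1 - yShift k * xShift k) + (yShift k * xShift k) * A * (yShift k * xShift k)

set_option linter.unusedSectionVars false

lemma xy1 : xShift k * yShift k = 1 := by
  ext v n
  simp [xShift, yShift, Finsupp.lcomapDomain, Finsupp.comapDomain,
    Finsupp.mapDomain_apply Nat.succ_injective, Finsupp.single_apply]

lemma yapply0 (v : V k) : (yShift k v) 0 = 0 := by
  simp [yShift, Finsupp.mapDomain_notin_range]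

lemma xsingle0 : xShift k (Finsupp.single 0 1) = 0 := by
  ext n
  simp [xShift, Finsupp.lcomapDomain, Finsupp.comapDomain, Finsupp.single_apply]

lemma yx_ne_one : yShift k * xShift k ≠ 1 := by
  intro h
  have h0 := congrArg (fun f : Module.End k (V k) => (f (Finsupp.single 0 1)) 0) h
  simp [Module.End.mul_apply, xsingle0, Finsupp.single_apply] at h0

section alg

local notation "X" => xShift k
local notation "Y" => yShift k

lemma g1 (r : Module.End k (V k)) : (Y * X) * (Y * r * X) = Y * r * X := by
  calc (Y*X)*(Y*r*X) = Y*(X*(Y*(r*X))) := by rw [mul_assoc Y X, mul_assoc Y r]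
    _ = Y*((X*Y)*(r*X)) := by rw [← mul_assoc X Y]
    _ = Y*r*X := by rw [xy1, one_mul, ← mul_assoc]

lemma g2 (r : Module.End k (V k)) : (Y * r * X) * (Y * X) = Y * r * X := by
  calc (Y*r*X)*(Y*X) = (Y*r)*((X*Y)*X) := by rw [mul_assoc (Y*r) X, ← mul_assoc X Y]
    _ = Y*r*X := by rw [xy1, one_mul]

lemma gee : (Y * X) * (Y * X) = Y * X := by
  have := g1 k 1
  simpa using this

lemma gse (c : k) (r : Module.End k (V k)) :
    (c • 1 + Y * r * X) * (Y * X) = c • (Y * X) + Y * r * X := by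
  rw [add_mul, smul_mul_assoc, one_mul, g2]

lemma ges (c : k) (r : Module.End k (V k)) :
    (Y * X) * (c • 1 + Y * r * X) = c • (Y * X) + Y * r * X := by
  rw [mul_add, mul_smul_comm, mul_one, g1]

lemma gfix (c : k) (r : Module.End k (V k)) :
    c • (1 - Y * X) + (Y * X) * (c • 1 + Y * r * X) * (Y * X) = c • 1 + Y * r * X := by
  rw [ges, add_mul, smul_mul_assoc, gee, g2, smul_sub c (1 : Module.End k (V k)) (Y * X)]
  abel

lemma gmem (p : k) (A : Module.End k (V k)) :
    p • (1 - Y * X) + (Y * X) * A * (Y * X)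
      = p • 1 + Y * (X * A * Y - p • 1) * X := by
  have h : (Y * X) * A * (Y * X) = Y * (X * A * Y) * X := by
    simp only [mul_assoc]
  have h2 : Y * (p • 1) * X = p • (Y * X) := by
    rw [mul_smul_comm, mul_one, smul_mul_assoc]
  rw [h, mul_sub Y (X * A * Y) (p • 1), sub_mul (Y * (X * A * Y)) (Y * (p • 1)) X, h2,
    smul_sub p (1 : Module.End k (V k)) (Y * X)]
  abel

lemma gleft (c p : k) (r A : Module.End k (V k)) :
    (c * p) • (1 - Y * X) + (Y * X) * ((c • 1 + Y * r * X) * A) * (Y * X)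
      = (c • 1 + Y * r * X) * (p • (1 - Y * X) + (Y * X) * A * (Y * X)) := by
  have h1 : (Y * X) * ((c • 1 + Y * r * X) * A) = (c • 1 + Y * r * X) * ((Y * X) * A) := by
    rw [← mul_assoc, ges, ← gse, mul_assoc]
  have h2 : (c • 1 + Y * r * X) * (1 - Y * X) = c • (1 - Y * X) := by
    rw [mul_sub (c • 1 + Y * r * X) 1 (Y * X), mul_one, gse,
      smul_sub c (1 : Module.End k (V k)) (Y * X)]; abel
  rw [h1, mul_assoc, mul_add, mul_smul_comm, h2, smul_smul, mul_comm p c, ← mul_assoc]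

lemma gright (c p : k) (r A : Module.End k (V k)) :
    (c * p) • (1 - Y * X) + (Y * X) * (A * (c • 1 + Y * r * X)) * (Y * X)
      = (p • (1 - Y * X) + (Y * X) * A * (Y * X)) * (c • 1 + Y * r * X) := by
  have h1 : ((Y * X) * (A * (c • 1 + Y * r * X))) * (Y * X)
      = ((Y * X) * A * (Y * X)) * (c • 1 + Y * r * X) := by
    rw [← mul_assoc (Y * X) A, mul_assoc ((Y * X) * A), gse, ← ges,
      ← mul_assoc ((Y * X) * A) (Y * X)]
  have h2 : (1 - Y * X) * (c • 1 + Y * r * X) = c • (1 - Y * X) := by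
    rw [sub_mul 1 (Y * X) (c • 1 + Y * r * X), one_mul, ges,
      smul_sub c (1 : Module.End k (V k)) (Y * X)]; abel
  rw [h1, add_mul, smul_mul_assoc, h2, smul_smul, mul_comm p c]

lemma entry00_add' (A B : Module.End k (V k)) :
    entry00 k (A + B) = entry00 k A + entry00 k B := by
  simp [entry00]

lemma entry00_S (c : k) (r : Module.End k (V k)) :
    entry00 k (c • 1 + Y * r * X) = c := by
  simp only [entry00, LinearMap.add_apply, LinearMap.smul_apply, Module.End.one_apply,
    Module.End.mul_apply, Finsupp.add_apply, Finsupp.smul_apply, smul_eq_mul, yapply0,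
    Finsupp.single_apply, if_pos rfl, if_true, mul_one, add_zero]

lemma entry00_S_mul (c : k) (r A : Module.End k (V k)) :
    entry00 k ((c • 1 + Y * r * X) * A) = c * entry00 k A := by
  simp only [entry00, Module.End.mul_apply, LinearMap.add_apply, LinearMap.smul_apply,
    Module.End.one_apply, Finsupp.add_apply, Finsupp.smul_apply, smul_eq_mul, yapply0,
    add_zero]

lemma entry00_mul_S (c : k) (r A : Module.End k (V k)) :
    entry00 k (A * (c • 1 + Y * r * X)) = c * entry00 k A := by
  have h : (X : Module.End k (V k)) ((Finsupp.single 0 1 : V k)) = 0 := xsingle0 k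
  simp only [entry00, Module.End.mul_apply, LinearMap.add_apply, LinearMap.smul_apply,
    Module.End.one_apply, h, map_zero, add_zero, map_smul, Finsupp.smul_apply, smul_eq_mul]

end alg

/-- Let `R = End_k(V)` for a free `k`-module `V` of countably infinite rank, let
`x, y` be the shift operators (so `x y = 1`, `y x ≠ 1`), and `S = k·1 + yRx`.
Then the extension `R/S` is split: with `e = yx`, the map
`E(A) = π(A) • (1 - e) + e A e` (where `π(A)` is the `(1,1)`-entry of `A`) is an
`(S,S)`-bimodule projection of `R` onto `S`. -/
theorem biseparable_stmt16 (S : Subring (Module.End k (V k)))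
    (hS : ∀ B : Module.End k (V k), B ∈ S ↔
      ∃ (c : k) (r : Module.End k (V k)), B = c • 1 + yShift k * r * xShift k) :
    xShift k * yShift k = 1 ∧
    yShift k * xShift k ≠ 1 ∧
    (∀ s : S, Eproj k (s : Module.End k (V k)) = s) ∧
    (∀ A : Module.End k (V k), Eproj k A ∈ S) ∧
    (∀ A B : Module.End k (V k), Eproj k (A + B) = Eproj k A + Eproj k B) ∧
    (∀ (s : S) (A : Module.End k (V k)),
      Eproj k ((s : Module.End k (V k)) * A) = (s : Module.End k (V k)) * Eproj k A ∧
      Eproj k (A * (s : Module.End k (V k))) = Eproj k A * (s : Module.End k (V k))) := by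
  refine ⟨xy1 k, yx_ne_one k, ?_, ?_, ?_, ?_⟩
  · rintro ⟨t, ht⟩
    obtain ⟨c, r, rfl⟩ := (hS t).1 ht
    show Eproj k _ = _
    rw [Eproj, entry00_S, gfix]
  · intro A
    rw [hS]
    exact ⟨entry00 k A, xShift k * A * yShift k - entry00 k A • 1,
      by rw [Eproj, gmem]⟩
  · intro A B
    simp only [Eproj, entry00_add', add_smul, mul_add, add_mul]
    abel
  · rintro ⟨t, ht⟩ A
    obtain ⟨c, r, rfl⟩ := (hS t).1 ht
    constructor
    · show Eproj k _ = _ * Eproj k A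
      rw [Eproj, Eproj, entry00_S_mul, gleft]
    · show Eproj k _ = Eproj k A * _
      rw [Eproj, Eproj, entry00_mul_S, gright]
end
end

section
/- Let $(F, G)$ be a Frobenius pair (i.e., $G$ is both right and left adjoint to $F$), with $\eta, \varepsilon$ the unit/counit of $F \dashv G$ and $\zeta, \nu$ the unit/counit of $G \dashv F$. Then $F$ is a separable functor if and only if there exists a natural transformation $\alpha: F \to F$ such that $\nu_C \circ G(\alpha_C) \circ \eta_C = 1_C$ for all objects $C$. -/
open CategoryTheory

/-- A functor `F : C ⥤ D` is separable if the natural transformation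
`Hom_C(-,-) → Hom_D(F(-),F(-))`, `f ↦ F(f)`, admits a natural retraction. -/
def SeparableFunctor {C D : Type*} [Category C] [Category D] (F : C ⥤ D) : Prop :=
  ∃ P : ∀ (X Y : C), (F.obj X ⟶ F.obj Y) → (X ⟶ Y),
    (∀ (X Y : C) (f : X ⟶ Y), P X Y (F.map f) = f) ∧
    (∀ (X' X Y Y' : C) (u : X' ⟶ X) (v : Y ⟶ Y') (g : F.obj X ⟶ F.obj Y),
      P X' Y' (F.map u ≫ g ≫ F.map v) = u ≫ P X Y g ≫ v)

/-- Let `(F, G)` be a Frobenius pair (`F ⊣ G` and `G ⊣ F`), with unit `η` and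
counit `ε` of `F ⊣ G`, and unit `ζ` and counit `ν` of `G ⊣ F`.  Then `F` is a
separable functor if and only if there is a natural transformation `α : F ⟶ F`
with `ν_C ∘ G(α_C) ∘ η_C = 1_C` for every object `C`. -/
theorem biseparable_stmt18 {C D : Type*} [Category C] [Category D]
    (F : C ⥤ D) (G : D ⥤ C) (adj : F ⊣ G) (adj' : G ⊣ F) :
    SeparableFunctor F ↔
      ∃ α : F ⟶ F, ∀ c : C,
        adj.unit.app c ≫ G.map (α.app c) ≫ adj'.counit.app c = 𝟙 c := by
  constructor
  · rintro ⟨P, h1, h2⟩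
    -- the Rafael retraction `nubar : F ⋙ G ⟶ 𝟭 C`, componentwise
    have hnat : ∀ {c c' : C} (f : c ⟶ c'),
        G.map (F.map f) ≫ P (G.obj (F.obj c')) c' (adj.counit.app (F.obj c')) =
          P (G.obj (F.obj c)) c (adj.counit.app (F.obj c)) ≫ f := by
      intro c c' f
      have hA := h2 (G.obj (F.obj c)) (G.obj (F.obj c')) c' c'
        (G.map (F.map f)) (𝟙 c') (adj.counit.app (F.obj c'))
      have hB := h2 (G.obj (F.obj c)) (G.obj (F.obj c)) c c'
        (𝟙 (G.obj (F.obj c))) f (adj.counit.app (F.obj c))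
      simp only [Functor.map_id, Category.comp_id, Category.id_comp] at hA hB
      have h := adj.counit.naturality (F.map f)
      dsimp at h
      rw [← hA, ← hB]
      congr 1
      simpa using h
    have hret : ∀ c : C,
        adj.unit.app c ≫ P (G.obj (F.obj c)) c (adj.counit.app (F.obj c)) = 𝟙 c := by
      intro c
      have e : F.map (adj.unit.app c) ≫ adj.counit.app (F.obj c) ≫ F.map (𝟙 c) =
          F.map (𝟙 c) := by simp
      have t := h2 c (G.obj (F.obj c)) c c (adj.unit.app c) (𝟙 c)
        (adj.counit.app (F.obj c))
      rw [e, h1] at t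
      simpa using t.symm
    refine ⟨{ app := fun c =>
        adj'.unit.app (F.obj c) ≫
          F.map (P (G.obj (F.obj c)) c (adj.counit.app (F.obj c)))
              naturality := ?_ }, ?_⟩
    · intro c c' f
      have h := adj'.unit.naturality (F.map f)
      dsimp at h ⊢
      rw [← Category.assoc, h, Category.assoc, ← F.map_comp, hnat f, F.map_comp,
        ← Category.assoc]
    · intro c
      dsimp
      rw [G.map_comp, Category.assoc]
      have hν := adj'.counit.naturality
        (P (G.obj (F.obj c)) c (adj.counit.app (F.obj c)))
      dsimp at hν
      rw [hν, ← Category.assoc (G.map (adj'.unit.app (F.obj c)))]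
      have htri := adj'.left_triangle_components (F.obj c)
      rw [htri]
      simpa using hret c
  · rintro ⟨α, hα⟩
    have hkey : ∀ (Y Y' : C) (v : Y ⟶ Y'),
        G.map (F.map v) ≫ G.map (α.app Y') ≫ adj'.counit.app Y' =
          G.map (α.app Y) ≫ adj'.counit.app Y ≫ v := by
      intro Y Y' v
      have hν := adj'.counit.naturality v
      dsimp at hν
      rw [← Category.assoc, ← G.map_comp, α.naturality v, G.map_comp,
        Category.assoc, hν]
    refine ⟨fun X Y g =>
      adj.unit.app X ≫ G.map g ≫ G.map (α.app Y) ≫ adj'.counit.app Y, ?_, ?_⟩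
    · intro X Y f
      show adj.unit.app X ≫ G.map (F.map f) ≫ G.map (α.app Y) ≫
          adj'.counit.app Y = f
      have h := adj.unit.naturality f
      dsimp at h
      rw [← Category.assoc, ← h, Category.assoc, hα Y, Category.comp_id]
    · intro X' X Y Y' u v g
      show adj.unit.app X' ≫ G.map (F.map u ≫ g ≫ F.map v) ≫
            G.map (α.app Y') ≫ adj'.counit.app Y' =
          u ≫ (adj.unit.app X ≫ G.map g ≫ G.map (α.app Y) ≫
            adj'.counit.app Y) ≫ v
      have hu := adj.unit.naturality u
      dsimp at hu
      rw [G.map_comp, G.map_comp]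
      simp only [Category.assoc]
      rw [hkey Y Y' v, ← Category.assoc, ← hu]
      simp only [Category.assoc]
end
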